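/- Suppose h : ℝ → ℝ is differentiable on an open set containing the interior Δ° of the simplex (applied to partial sums of coordinates). Then the Jacobian matrix of the lifted map L(h) : ℝ^{k−1} → ℝ^{k−1} at any θ ∈ Δ° is lower triangular, with l-th diagonal entry equal to h'(θ₁+⋯+θ_l). In particular, det J(L(h))(θ) = ∏_{l=1}^{k−1} h'(θ₁+⋯+θ_l). -/

import Mathlib

/-- The lifting operator `L`. -/
noncomputable def lift (n : ℕ) (h : ℝ → ℝ) (θ : Fin n → ℝ) : Fin n → ℝ :=
  fun l => h (∑ i ∈ Finset.Iic l, θ i) -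
    (if l.1 = 0 then 0 else h (∑ i ∈ Finset.Iio l, θ i))

/-- The simplex `Δ`. -/
def stdSimplex' (n : ℕ) : Set (Fin n → ℝ) :=
  {θ | (∀ l, θ l ∈ Set.Icc (0:ℝ) 1) ∧ ∑ l, θ l ≤ 1}

/-- The Jacobian matrix of the lifted map `L(h)` at `θ`:
entry `(l, m)` equals `h'(θ₁+⋯+θ_{l+1})·1{m ≤ l} − h'(θ₁+⋯+θ_l)·1{m < l}`. -/
noncomputable def liftJac (n : ℕ) (h' : ℝ → ℝ) (θ : Fin n → ℝ) :
    Matrix (Fin n) (Fin n) ℝ :=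
  fun l m => (if m ≤ l then h' (∑ i ∈ Finset.Iic l, θ i) else 0)
           - (if m < l then h' (∑ i ∈ Finset.Iio l, θ i) else 0)

/-! The `l`-th component of `L(h)` is `h ∘ S_l − h ∘ S_{l−1}` with `S_l θ = θ₁+⋯+θ_l` linear,
so by the chain rule its gradient is `h'(S_l θ)·1{m ≤ l} − h'(S_{l−1} θ)·1{m < l}`,
which vanishes for `m > l`. On `Δ°` every coordinate is positive and the total sum is `< 1`
(the coordinate and sum functionals are open maps), so every nonempty partial sum lies in
`(0,1)`, where `h` is differentiable. The determinant of a triangular matrix is the product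
of its diagonal. -/

open Finset

theorem IsOpenMap.mem_interior_of_subset_preimage {X Y : Type*} [TopologicalSpace X]
    [TopologicalSpace Y] {f : X → Y} (hf : IsOpenMap f) {S : Set X} {t : Set Y}
    (hS : S ⊆ f ⁻¹' t) {x : X} (hx : x ∈ interior S) : f x ∈ interior t :=
  hf.interior_preimage_subset_preimage_interior (interior_mono hS hx)

section Simplex

variable {n : ℕ} {θ : Fin n → ℝ}

theorem pos_of_mem_interior_stdSimplex' (hθ : θ ∈ interior (stdSimplex' n)) (l : Fin n) :
    0 < θ l := by
  have := (isOpenMap_eval l).mem_interior_of_subset_preimage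
    (t := Set.Ici 0) (fun θ hθ => (hθ.1 l).1) hθ
  rwa [interior_Ici] at this

theorem sum_lt_one_of_mem_interior_stdSimplex' [Nonempty (Fin n)]
    (hθ : θ ∈ interior (stdSimplex' n)) : ∑ i, θ i < 1 := by
  let total : StrongDual ℝ (Fin n → ℝ) := ∑ i, ContinuousLinearMap.proj i
  have htotal : total ≠ 0 := fun h0 => by
    obtain ⟨l⟩ := ‹Nonempty (Fin n)›
    have := congr($h0 (fun _ => 1))
    simp [total] at this
    exact l.pos.ne' this
  have := (total.isOpenMap_of_ne_zero htotal).mem_interior_of_subset_preimage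
    (t := Set.Iic 1) (fun θ hθ => by simpa [total] using hθ.2) hθ
  simpa [total, interior_Iic] using this

theorem sum_mem_Ioo_of_mem_interior_stdSimplex' (hθ : θ ∈ interior (stdSimplex' n))
    {s : Finset (Fin n)} (hs : s.Nonempty) : ∑ i ∈ s, θ i ∈ Set.Ioo 0 1 := by
  have : Nonempty (Fin n) := hs.to_subtype.map Subtype.val
  refine ⟨sum_pos (fun i _ => pos_of_mem_interior_stdSimplex' hθ i) hs, ?_⟩
  calc ∑ i ∈ s, θ i ≤ ∑ i, θ i :=
        sum_le_sum_of_subset_of_nonneg (subset_univ s)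
          fun i _ _ => (pos_of_mem_interior_stdSimplex' hθ i).le
    _ < 1 := sum_lt_one_of_mem_interior_stdSimplex' hθ

end Simplex

theorem HasDerivAt.hasFDerivAt_comp_sum {ι : Type*} [Fintype ι] {h : ℝ → ℝ} {d : ℝ}
    (s : Finset ι) {θ : ι → ℝ} (hh : HasDerivAt h d (∑ i ∈ s, θ i)) :
    HasFDerivAt (fun θ : ι → ℝ => h (∑ i ∈ s, θ i))
      (d • ∑ i ∈ s, ContinuousLinearMap.proj (R := ℝ) (φ := fun _ : ι => ℝ) i) θ :=
  hh.comp_hasFDerivAt θ (HasFDerivAt.fun_sum fun i _ => hasFDerivAt_apply i θ)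

section Lift

variable {n : ℕ} {h h' : ℝ → ℝ} {θ : Fin n → ℝ}

theorem proj_comp_liftJac (l : Fin n) :
    (ContinuousLinearMap.proj l).comp
        (LinearMap.toContinuousLinearMap (Matrix.mulVecLin (liftJac n h' θ))) =
      h' (∑ i ∈ Iic l, θ i) • ∑ i ∈ Iic l, ContinuousLinearMap.proj i -
        h' (∑ i ∈ Iio l, θ i) • ∑ i ∈ Iio l, ContinuousLinearMap.proj i := by
  ext v
  simp [liftJac, Matrix.mulVec, dotProduct, sub_mul, ite_mul, sum_sub_distrib, mul_sum,
    ← sum_filter, filter_ge_eq_Iic, filter_gt_eq_Iio]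

theorem liftJac_of_lt {l m : Fin n} (hlm : l < m) : liftJac n h' θ l m = 0 := by
  simp [liftJac, not_le.mpr hlm, hlm.not_gt]

theorem liftJac_self (l : Fin n) : liftJac n h' θ l l = h' (∑ i ∈ Iic l, θ i) := by
  simp [liftJac]

theorem det_liftJac : (liftJac n h' θ).det = ∏ l : Fin n, h' (∑ i ∈ Iic l, θ i) := by
  rw [Matrix.det_of_isLowerTriangular _ fun l m hlm => liftJac_of_lt hlm]
  simp_rw [liftJac_self]

theorem hasFDerivAt_lift_apply (hd : ∀ u ∈ Set.Ioo 0 1, HasDerivAt h (h' u) u)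
    (hθ : θ ∈ interior (stdSimplex' n)) (l : Fin n) :
    HasFDerivAt (fun θ => lift n h θ l)
      (h' (∑ i ∈ Iic l, θ i) • ∑ i ∈ Iic l, ContinuousLinearMap.proj i -
        h' (∑ i ∈ Iio l, θ i) • ∑ i ∈ Iio l, ContinuousLinearMap.proj i :
          (Fin n → ℝ) →L[ℝ] ℝ) θ := by
  have hIic := (hd _ (sum_mem_Ioo_of_mem_interior_stdSimplex' hθ ⟨l, mem_Iic.2 le_rfl⟩)
    ).hasFDerivAt_comp_sum (Iic l)
  by_cases hl : l.1 = 0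
  · have hIio : Iio l = ∅ := by
      ext m
      simp [Fin.lt_def, hl]
    simpa [lift, hl, hIio] using hIic
  · have hIio := (hd _ (sum_mem_Ioo_of_mem_interior_stdSimplex' hθ
      ⟨⟨0, l.pos⟩, mem_Iio.2 (Fin.lt_def.2 (Nat.pos_of_ne_zero hl))⟩)
      ).hasFDerivAt_comp_sum (Iio l)
    simpa [lift, hl] using hIic.fun_sub hIio

theorem hasFDerivAt_lift (hd : ∀ u ∈ Set.Ioo 0 1, HasDerivAt h (h' u) u)
    (hθ : θ ∈ interior (stdSimplex' n)) :
    HasFDerivAt (lift n h)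
      (LinearMap.toContinuousLinearMap (Matrix.mulVecLin (liftJac n h' θ))) θ :=
  hasFDerivAt_pi'' fun l => by
    rw [proj_comp_liftJac]
    exact hasFDerivAt_lift_apply hd hθ l

end Lift

theorem lift_jacobian_general (k : ℕ) (h h' : ℝ → ℝ)
    (hd : ∀ u ∈ Set.Ioo (0:ℝ) 1, HasDerivAt h (h' u) u)
    (θ : Fin (k - 1) → ℝ) (hθ : θ ∈ interior (stdSimplex' (k - 1))) :
    HasFDerivAt (lift (k - 1) h)
      (LinearMap.toContinuousLinearMap
        (Matrix.mulVecLin (liftJac (k - 1) h' θ))) θ ∧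
    (∀ l m : Fin (k - 1), l < m → liftJac (k - 1) h' θ l m = 0) ∧
    (∀ l : Fin (k - 1), liftJac (k - 1) h' θ l l = h' (∑ i ∈ Finset.Iic l, θ i)) ∧
    (liftJac (k - 1) h' θ).det = ∏ l : Fin (k - 1), h' (∑ i ∈ Finset.Iic l, θ i) :=
  ⟨hasFDerivAt_lift hd hθ, fun _ _ => liftJac_of_lt, liftJac_self, det_liftJac⟩

/-- if `h` is differentiable (at the relevant partial sums, which lie in
`(0,1)` for `θ ∈ Δ°`), then the Jacobian matrix of `L(h)` at any `θ ∈ Δ°` is lower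
triangular with `l`-th diagonal entry `h'(θ₁+⋯+θ_l)`; in particular its determinant is
`∏_{l} h'(θ₁+⋯+θ_l)`. -/
theorem lift_jacobian (k : ℕ) (hk : 2 ≤ k) (h h' : ℝ → ℝ)
    (hd : ∀ u ∈ Set.Ioo (0:ℝ) 1, HasDerivAt h (h' u) u)
    (θ : Fin (k - 1) → ℝ) (hθ : θ ∈ interior (stdSimplex' (k - 1))) :
    HasFDerivAt (lift (k - 1) h)
      (LinearMap.toContinuousLinearMap
        (Matrix.mulVecLin (liftJac (k - 1) h' θ))) θ ∧
    (∀ l m : Fin (k - 1), l < m → liftJac (k - 1) h' θ l m = 0) ∧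
    (∀ l : Fin (k - 1), liftJac (k - 1) h' θ l l = h' (∑ i ∈ Finset.Iic l, θ i)) ∧
    (liftJac (k - 1) h' θ).det = ∏ l : Fin (k - 1), h' (∑ i ∈ Finset.Iic l, θ i) :=
  lift_jacobian_general k h h' hd θ hθ
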